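/- arXiv:2402.16545 — 7 statements merged into one kernel-verified Lean document; each statement's English description precedes it below -/
import Mathlib

section
/- There exist (i) a set S of functions from ℝ to ℝ of cardinality 2^𝔠 that is algebraically independent over ℝ, such that every function in the (non-unital) ℝ-algebra generated by S is bounded on every compact interval [α,β] and its restriction to every interval [α,β] is Riemann integrable, and (ii) a set C of continuous functions from [0,1] to ℝ of cardinality 𝔠 that is algebraically independent over ℝ, such that for every nonzero element r of the algebra generated by S and every nonzero element c of the algebra generated by C, the composite function r ∘ c : [0,1] → ℝ is not Riemann integrable on [0,1]. -/
open MeasureTheory Set Cardinal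

/-- A function `f : ℝ → ℝ` is Riemann integrable on `[a,b]` iff it is bounded there and
(by Lebesgue's criterion) its set of discontinuity points (relative to `[a,b]`)
has Lebesgue measure zero. -/
def RiemannIntegrableOn (f : ℝ → ℝ) (a b : ℝ) : Prop :=
  (∃ M : ℝ, ∀ x ∈ Set.Icc a b, |f x| ≤ M) ∧
    volume {x | x ∈ Set.Icc a b ∧ ¬ ContinuousWithinAt f (Set.Icc a b) x} = 0

/-- Riemann integrability on `[0,1]` for a function defined on the interval `[0,1]`:
boundedness together with the Lebesgue criterion (the set of discontinuity points,
viewed as a subset of `ℝ`, is Lebesgue null). -/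
def RiemannIntegrableI (g : Set.Icc (0:ℝ) 1 → ℝ) : Prop :=
  (∃ M : ℝ, ∀ x, |g x| ≤ M) ∧
    volume (Subtype.val '' {x : Set.Icc (0:ℝ) 1 | ¬ ContinuousAt g x}) = 0

/-!
The members `f_J` (`J ⊆ ℝ`) of `S` vanish off the closed null set `±cantorSet`. The binary code
of a point of the Cantor set after its first `1` selects a "trace assignment": a finite `E ⊆ ℝ`
with a labelling of the subsets of `E` by `[0,1]`, and `f_J` takes the label of `J ∩ E`.
Every assignment is carried by points of both signs arbitrarily close to `0`, and finitely many
distinct sets are separated by a finite `E`; so for a nonzero `P` without constant term,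
`r = P(f_J₁, …, f_Jₙ)` is a Riemann integrable function vanishing at `0` that takes one value
`δ = P(v) ≠ 0` arbitrarily close to `0` on both sides.

The members of `C` are `x ↦ d(x) e^{a x}`, with `d` the distance to a closed set `K ⊆ (0,1)` of
positive measure containing no rational, and `a` in a Hamel basis. A polynomial `g` in them
without constant term vanishes on `K`. Near any point, `d` is affine on some interval, where `g`
is an exponential polynomial with distinct exponents (by ℚ-independence), so `g ≢ 0` there. By
the intermediate value theorem, arbitrarily close to each point of `K` the function `g` takes all
small values of one sign, among them points where `r = δ`, whereas `r ∘ g = 0` on `K`; so `r ∘ g`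
is discontinuous on all of `K`.
-/

open MvPolynomial Filter Real Asymptotics Metric

noncomputable section

/-! ### Riemann integrability through discontinuity sets -/

theorem riemannIntegrableOn_of_eq_zero_off {f : ℝ → ℝ} {D : Set ℝ} (hD : IsClosed D)
    (hD₀ : volume D = 0) (hf : ∀ x ∉ D, f x = 0) {a b : ℝ}
    (hbdd : ∃ M, ∀ x ∈ Icc a b, |f x| ≤ M) : RiemannIntegrableOn f a b := by
  refine ⟨hbdd, measure_mono_null (fun x hx => ?_) hD₀⟩
  by_contra hxD
  have hf₀ : f =ᶠ[nhds x] fun _ => 0 := eventually_of_mem (hD.isOpen_compl.mem_nhds hxD) hf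
  exact hx.2 (continuousAt_const.congr hf₀.symm).continuousWithinAt

theorem ContinuousAt.of_restrict_Icc {F : ℝ → ℝ} {a b x : ℝ} (hx : x ∈ Ioo a b)
    (h : ContinuousAt (fun y : Icc a b => F y) ⟨x, Ioo_subset_Icc_self hx⟩) :
    ContinuousAt F x :=
  ((continuousWithinAt_iff_continuousAt_domRestrict F _).2 h).continuousAt
    (Icc_mem_nhds hx.1 hx.2)

theorem not_riemannIntegrableI_of_not_continuousAt {g : Icc (0 : ℝ) 1 → ℝ} {K : Set ℝ}
    (hK : volume K ≠ 0) (hKsub : K ⊆ Icc 0 1)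
    (h : ∀ x (hx : x ∈ K), ¬ ContinuousAt g ⟨x, hKsub hx⟩) : ¬ RiemannIntegrableI g := by
  refine fun hg => hK (measure_mono_null (fun x hx => ?_) hg.2)
  exact ⟨⟨x, hKsub hx⟩, h x hx, rfl⟩

theorem not_continuousAt_comp_of_eq_near_zero {r g : ℝ → ℝ} {x₀ δ : ℝ} (hg : Continuous g)
    (hgx₀ : g x₀ = 0) (hgne : ∀ ε > 0, ∃ y ∈ ball x₀ ε, g y ≠ 0) (hr₀ : r 0 = 0) (hδ : δ ≠ 0)
    (hr : ∀ ε > 0, ∃ t ∈ Ioo 0 ε, r t = δ ∧ r (-t) = δ) :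
    ¬ ContinuousAt (r ∘ g) x₀ := by
  intro hc
  obtain ⟨η, hη, hball⟩ := Metric.continuousAt_iff.1 hc |δ| (abs_pos.2 hδ)
  obtain ⟨y, hy, hgy⟩ := hgne η hη
  obtain ⟨t, ht, hrt, hrt'⟩ := hr |g y| (abs_pos.2 hgy)
  obtain ⟨s, hs, hrs⟩ : ∃ s ∈ uIcc (g x₀) (g y), r s = δ := by
    rw [hgx₀]
    rcases hgy.lt_or_gt with hneg | hpos
    · rw [abs_of_neg hneg] at ht
      exact ⟨-t, mem_uIcc.2 (Or.inr ⟨by linarith [ht.2], by linarith [ht.1]⟩), hrt'⟩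
    · rw [abs_of_pos hpos] at ht
      exact ⟨t, mem_uIcc.2 (Or.inl ⟨ht.1.le, ht.2.le⟩), hrt⟩
  obtain ⟨y', hy', rfl⟩ := intermediate_value_uIcc hg.continuousOn hs
  have hy'η : y' ∈ ball x₀ η := by
    rw [Real.ball_eq_Ioo] at hy ⊢
    exact ordConnected_Ioo.uIcc_subset (mem_Ioo.2 ⟨by linarith, by linarith⟩) hy hy'
  have := hball hy'η
  rw [Function.comp_apply, Function.comp_apply, hrs, hgx₀, hr₀, dist_zero_right,
    Real.norm_eq_abs] at this
  exact lt_irrefl _ this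

/-! ### Exponential polynomials -/

theorem isLittleO_pow_mul_exp {k l : ℕ} {γ δ : ℝ} (h : γ < δ ∨ γ = δ ∧ k < l) :
    (fun y : ℝ => y ^ k * exp (γ * y)) =o[atTop] fun y => y ^ l * exp (δ * y) := by
  rcases h with h | ⟨rfl, h⟩
  · have hexp : (fun y : ℝ => exp ((δ - γ) * y)) =O[atTop]
        fun y => y ^ l * exp ((δ - γ) * y) := by
      refine IsBigO.of_bound 1 ?_
      filter_upwards [eventually_ge_atTop 1] with y hy
      rw [norm_of_nonneg (exp_pos _).le, norm_of_nonneg (by positivity), one_mul]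
      exact le_mul_of_one_le_left (exp_pos _).le (one_le_pow₀ hy)
    refine (((isLittleO_pow_exp_pos_mul_atTop k (sub_pos.2 h)).trans_isBigO hexp).mul_isBigO
      (isBigO_refl (fun y => exp (γ * y)) atTop)).congr_right fun y => ?_
    rw [mul_assoc, ← exp_add]
    ring_nf
  · exact (isLittleO_pow_pow_atTop_of_lt h).mul_isBigO (isBigO_refl _ _)

theorem eq_zero_of_sum_pow_mul_exp_eventually_eq_zero {ι : Type*} {s : Finset ι} {d : ι → ℕ}
    {β c : ι → ℝ} (hinj : InjOn (fun i => toLex (β i, d i)) s)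
    (h : ∀ᶠ y in atTop, ∑ i ∈ s, c i * (y ^ d i * exp (β i * y)) = 0) :
    ∀ i ∈ s, c i = 0 := by
  classical
  by_contra! hne
  obtain ⟨i₀, hi₀, hmax⟩ := (s.filter (c · ≠ 0)).exists_max_image (fun i => toLex (β i, d i))
    (by simpa [Finset.Nonempty] using hne)
  have hc₀ : c i₀ ≠ 0 := (Finset.mem_filter.1 hi₀).2
  set u : ι → ℝ → ℝ := fun i y => y ^ d i * exp (β i * y)
  have hsmall : ∀ i ∈ (s.filter (c · ≠ 0)).erase i₀,
      (fun y => c i * u i y) =o[atTop] u i₀ := by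
    intro i hi
    have hi' := Finset.mem_of_mem_erase hi
    have hlt : toLex (β i, d i) < toLex (β i₀, d i₀) :=
      (hmax i hi').lt_of_ne fun heq => Finset.ne_of_mem_erase hi
        (hinj (Finset.mem_filter.1 hi').1 (Finset.mem_filter.1 hi₀).1 heq)
    exact (isLittleO_pow_mul_exp (Prod.Lex.lt_iff.1 hlt)).const_mul_left (c i)
  have hdom : (fun y => c i₀ * u i₀ y) =o[atTop] u i₀ := by
    refine (IsLittleO.fun_sum hsmall).neg_left.congr' ?_ EventuallyEq.rfl
    filter_upwards [h] with y hy
    rw [← Finset.sum_filter_of_ne fun i _ hi => left_ne_zero_of_mul hi,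
      ← Finset.add_sum_erase _ _ hi₀] at hy
    linear_combination -hy
  refine isLittleO_irrefl (Eventually.frequently ?_) ((isLittleO_const_mul_left_iff hc₀).1 hdom)
  filter_upwards [eventually_gt_atTop 0] with y hy
  exact mul_ne_zero (pow_pos hy _).ne' (exp_pos _).ne'

theorem eq_zero_of_sum_sub_pow_mul_exp_eqOn_zero {ι : Type*} {s : Finset ι} {d : ι → ℕ}
    {β c : ι → ℝ} (hinj : InjOn (fun i => toLex (β i, d i)) s) (e : ℝ) {u v : ℝ} (huv : u < v)
    (h : ∀ y ∈ Ioo u v, ∑ i ∈ s, c i * ((y - e) ^ d i * exp (β i * y)) = 0) :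
    ∀ i ∈ s, c i = 0 := by
  set G : ℝ → ℝ := fun y => ∑ i ∈ s, c i * ((y - e) ^ d i * exp (β i * y))
  have hG : AnalyticOnNhd ℝ G univ := by
    refine Finset.analyticOnNhd_fun_sum _ fun i _ => analyticOnNhd_const.mul ?_
    exact ((analyticOnNhd_id.sub analyticOnNhd_const).pow _).mul
      (analyticOnNhd_const.mul analyticOnNhd_id).rexp
  have hG₀ : EqOn G 0 univ := by
    refine hG.eqOn_zero_of_preconnected_of_eventuallyEq_zero isPreconnected_univ
      (mem_univ ((u + v) / 2)) ?_
    filter_upwards [Ioo_mem_nhds (by linarith : u < (u + v) / 2) (by linarith : (u + v) / 2 < v)]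
      using h
  have hshift : ∀ᶠ y in atTop,
      ∑ i ∈ s, (c i * exp (β i * e)) * (y ^ d i * exp (β i * y)) = 0 := by
    refine Eventually.of_forall fun y => ?_
    refine (Finset.sum_congr rfl fun i _ => ?_).trans (hG₀ (mem_univ (y + e)))
    rw [add_sub_cancel_right, mul_add, exp_add]
    ring
  intro i hi
  have := eq_zero_of_sum_pow_mul_exp_eventually_eq_zero hinj hshift i hi
  exact (mul_eq_zero.1 this).resolve_right (exp_pos _).ne'

theorem eval_mul_exp {σ : Type*} [Fintype σ] (Q : MvPolynomial σ ℝ) (w y : ℝ) (a : σ → ℝ) :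
    eval (fun j => w * exp (a j * y)) Q = ∑ α ∈ Q.support,
      coeff α Q * (w ^ (∑ j, α j) * exp (Finsupp.linearCombination ℕ a α * y)) := by
  rw [eval_eq']
  refine Finset.sum_congr rfl fun α _ => ?_
  rw [Finsupp.linearCombination_apply, Finsupp.sum_fintype _ _ (by simp), Finset.sum_mul,
    exp_sum, ← Finset.prod_pow_eq_pow_sum, ← Finset.prod_mul_distrib]
  refine congrArg _ (Finset.prod_congr rfl fun j _ => ?_)
  rw [mul_pow, ← exp_nat_mul, nsmul_eq_mul, mul_assoc]

/-! ### Distance to a closed set, times exponentials -/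

theorem Metric.infDist_eq_dist_of_dist_add_dist_eq {α : Type*} [PseudoMetricSpace α]
    {K : Set α} {x y z : α} (hz : z ∈ K) (hx : infDist x K = dist x z)
    (hy : dist x y + dist y z = dist x z) : infDist y K = dist y z :=
  (infDist_le_dist_of_mem hz).antisymm
    (by linarith [infDist_le_infDist_add_dist (s := K) (x := x) (y := y)])

theorem IsClosed.exists_infDist_eq_affine {K : Set ℝ} (hK : IsClosed K) (hKne : K.Nonempty)
    {x : ℝ} (hx : x ∉ K) {ε : ℝ} (hε : 0 < ε) :
    ∃ u v z σ : ℝ, u < v ∧ Ioo u v ⊆ Ioo (x - ε) (x + ε) ∧ σ ≠ 0 ∧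
      ∀ y ∈ Ioo u v, infDist y K = σ * (y - z) := by
  obtain ⟨z, hzK, hxz⟩ := hK.exists_infDist_eq_dist hKne x
  have hd : 0 < dist x z := hxz ▸ (hK.notMem_iff_infDist_pos hKne).1 hx
  have hinfDist : ∀ y, |x - y| + |y - z| = |x - z| → infDist y K = |y - z| := by
    simpa only [Real.dist_eq] using fun y => infDist_eq_dist_of_dist_add_dist_eq hzK hxz
  rw [Real.dist_eq] at hd
  set η := min ε |x - z|
  have hη : 0 < η := lt_min hε hd
  have hηε : η ≤ ε := min_le_left _ _
  have hηd : η ≤ |x - z| := min_le_right _ _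
  rcases lt_or_gt_of_ne (sub_ne_zero.1 (abs_pos.1 hd)) with hxz' | hxz'
  · rw [abs_of_neg (by linarith)] at hηd hinfDist
    refine ⟨x, x + η, z, -1, by linarith, fun y hy => ⟨by linarith [hy.1], by linarith [hy.2]⟩,
      by norm_num, fun y hy => ?_⟩
    rw [hinfDist y (by rw [abs_of_neg (by linarith [hy.1]), abs_of_neg (by linarith [hy.2])]; ring),
      abs_of_neg (by linarith [hy.2])]
    ring
  · rw [abs_of_pos (by linarith)] at hηd hinfDist
    refine ⟨x - η, x, z, 1, by linarith, fun y hy => ⟨by linarith [hy.1], by linarith [hy.2]⟩,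
      one_ne_zero, fun y hy => ?_⟩
    rw [hinfDist y (by rw [abs_of_pos (by linarith [hy.2]), abs_of_pos (by linarith [hy.1])]; ring),
      abs_of_pos (by linarith [hy.1]), one_mul]

def distExp (K : Set ℝ) (a x : ℝ) : ℝ := infDist x K * exp (a * x)

theorem continuous_eval_distExp {σ : Type*} (K : Set ℝ) (a : σ → ℝ) (Q : MvPolynomial σ ℝ) :
    Continuous fun x => eval (fun j => distExp K (a j) x) Q :=
  (continuous_eval Q).comp (continuous_pi fun _ =>
    (continuous_infDist_pt K).mul (continuous_const.mul continuous_id).rexp)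

theorem eval_distExp_of_mem {σ : Type*} {K : Set ℝ} {a : σ → ℝ} {Q : MvPolynomial σ ℝ}
    (hQ : constantCoeff Q = 0) {x : ℝ} (hx : x ∈ K) :
    eval (fun j => distExp K (a j) x) Q = 0 := by
  simp [distExp, infDist_zero_of_mem hx, eval_zero', hQ]

theorem exists_eval_distExp_ne_zero {σ : Type*} [Fintype σ] {K : Set ℝ} (hK : IsClosed K)
    (hKne : K.Nonempty) (hKc : Dense Kᶜ) {a : σ → ℝ} (ha : LinearIndependent ℚ a)
    {Q : MvPolynomial σ ℝ} (hQ : Q ≠ 0) (x : ℝ) {ε : ℝ} (hε : 0 < ε) :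
    ∃ y ∈ ball x ε, eval (fun j => distExp K (a j) y) Q ≠ 0 := by
  obtain ⟨x', hx'K, hx'⟩ := hKc.exists_mem_open isOpen_ball
    (nonempty_ball.2 (half_pos hε) : (ball x (ε / 2)).Nonempty)
  obtain ⟨u, v, z, c, huv, hsub, hc, hK_aff⟩ := hK.exists_infDist_eq_affine hKne hx'K (half_pos hε)
  have hsub' : Ioo u v ⊆ ball x ε := by
    rw [Real.ball_eq_Ioo] at hx' ⊢
    exact fun y hy => ⟨by linarith [(hsub hy).1, hx'.1], by linarith [(hsub hy).2, hx'.2]⟩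
  by_contra! h
  have hzero : ∀ y ∈ Ioo u v, ∑ α ∈ Q.support, (coeff α Q * c ^ (∑ j, α j)) *
      ((y - z) ^ (∑ j, α j) * exp (Finsupp.linearCombination ℕ a α * y)) = 0 := by
    intro y hy
    rw [← h y (hsub' hy)]
    simp only [distExp]
    rw [eval_mul_exp, hK_aff y hy]
    refine Finset.sum_congr rfl fun α _ => ?_
    rw [mul_pow]
    ring
  -- ℚ-independence of `a` makes the exponents `∑ j, α j • a j` pairwise distinct.
  have hinj : InjOn (fun α => toLex (Finsupp.linearCombination ℕ a α, ∑ j, α j)) Q.support :=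
    fun α _ α' _ h => (ha.restrict_scalars' ℕ) (congrArg (fun p => (ofLex p).1) h)
  obtain ⟨α, hα⟩ := Finset.nonempty_iff_ne_empty.2 (mt support_eq_empty.1 hQ)
  have := eq_zero_of_sum_sub_pow_mul_exp_eqOn_zero hinj z huv hzero α hα
  exact mem_support_iff.1 hα ((mul_eq_zero.1 this).resolve_right (pow_ne_zero _ hc))

theorem exists_isClosed_subset_Ioo_volume_ne_zero :
    ∃ K : Set ℝ, IsClosed K ∧ K ⊆ Ioo 0 1 ∧ (∀ q : ℚ, (q : ℝ) ∉ K) ∧ volume K ≠ 0 := by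
  obtain ⟨U, hQU, hU, hU1⟩ := (range ((↑) : ℚ → ℝ)).exists_isOpen_lt_of_lt 1
    (by rw [(countable_range _).measure_zero volume]; exact one_pos)
  have hQ : ∀ q : ℚ, (q : ℝ) ∉ Icc 0 1 \ U := fun q hq => hq.2 (hQU (mem_range_self q))
  refine ⟨Icc 0 1 \ U, isClosed_Icc.sdiff hU, fun x hx => ?_, hQ, fun h₀ => ?_⟩
  · refine ⟨hx.1.1.lt_of_ne ?_, hx.1.2.lt_of_ne ?_⟩
    · rintro rfl; exact hQ 0 (by simpa using hx)
    · rintro rfl; exact hQ 1 (by simpa using hx)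
  · have : volume (Icc (0 : ℝ) 1) ≤ volume (Icc 0 1 \ U) + volume U :=
      (measure_mono (subset_sdiff_union _ _)).trans (measure_union_le _ _)
    rw [Real.volume_Icc, h₀, zero_add] at this
    norm_num at this
    exact this.not_gt hU1

def fatCantor : Set ℝ := exists_isClosed_subset_Ioo_volume_ne_zero.choose

theorem isClosed_fatCantor : IsClosed fatCantor :=
  exists_isClosed_subset_Ioo_volume_ne_zero.choose_spec.1

theorem fatCantor_subset_Ioo : fatCantor ⊆ Ioo 0 1 :=
  exists_isClosed_subset_Ioo_volume_ne_zero.choose_spec.2.1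

theorem ratCast_notMem_fatCantor (q : ℚ) : (q : ℝ) ∉ fatCantor :=
  exists_isClosed_subset_Ioo_volume_ne_zero.choose_spec.2.2.1 q

theorem volume_fatCantor_ne_zero : volume fatCantor ≠ 0 :=
  exists_isClosed_subset_Ioo_volume_ne_zero.choose_spec.2.2.2

theorem fatCantor_nonempty : fatCantor.Nonempty :=
  nonempty_of_measure_ne_zero volume_fatCantor_ne_zero

theorem dense_compl_fatCantor : Dense fatCantorᶜ :=
  Rat.denseRange_cast.mono (range_subset_iff.2 ratCast_notMem_fatCantor)

def distExpOn (a : ℝ) (x : Icc (0 : ℝ) 1) : ℝ := distExp fatCantor a x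

theorem continuous_distExpOn (a : ℝ) : Continuous (distExpOn a) :=
  ((continuous_infDist_pt _).mul (continuous_const.mul continuous_id).rexp).comp
    continuous_subtype_val

theorem distExpOn_injective : Function.Injective distExpOn := by
  intro a a' h
  have hpos : 0 < infDist (1 / 2) fatCantor :=
    (isClosed_fatCantor.notMem_iff_infDist_pos fatCantor_nonempty).1
      (by simpa using ratCast_notMem_fatCantor (1 / 2))
  have := congrFun h ⟨1 / 2, by norm_num⟩
  simp only [distExpOn, distExp] at this
  have := exp_injective (mul_left_cancel₀ hpos.ne' this)
  linarith

theorem eval_distExpOn_ne_zero {m : ℕ} {a : Fin m → ℝ} (ha : LinearIndependent ℚ a)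
    {Q : MvPolynomial (Fin m) ℝ} (hQ : Q ≠ 0) :
    (fun x => eval (fun j => distExpOn (a j) x) Q) ≠ 0 := by
  obtain ⟨y, hy, hne⟩ := exists_eval_distExp_ne_zero isClosed_fatCantor fatCantor_nonempty
    dense_compl_fatCantor ha hQ (1 / 2) (by norm_num : (0 : ℝ) < 1 / 2)
  rw [Real.ball_eq_Ioo] at hy
  exact fun h₀ => hne (congrFun h₀ ⟨y, by linarith [hy.1], by linarith [hy.2]⟩)

/-! ### The Cantor set -/

theorem volume_preCantorSet_le (n : ℕ) :
    volume (preCantorSet n) ≤ ENNReal.ofReal ((2 / 3) ^ n) := by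
  induction n with
  | zero => simp [Real.volume_Icc]
  | succ n ih =>
    have hleft : (· / 3 : ℝ → ℝ) = AffineMap.homothety (0 : ℝ) (1 / 3 : ℝ) := by
      funext x; simp [AffineMap.homothety_apply]; ring
    have hright : (fun x : ℝ => (2 + x) / 3) = AffineMap.homothety (1 : ℝ) (1 / 3 : ℝ) := by
      funext x; simp [AffineMap.homothety_apply]; ring
    rw [preCantorSet_succ, hleft, hright]
    refine (measure_union_le _ _).trans ?_
    rw [Measure.addHaar_image_homothety, Measure.addHaar_image_homothety, ← two_mul, ← mul_assoc,
      Module.finrank_self, pow_one, abs_of_pos (by norm_num), ← ENNReal.ofReal_ofNat,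
      ← ENNReal.ofReal_mul (by norm_num)]
    calc _ ≤ ENNReal.ofReal (2 * (1 / 3)) * ENNReal.ofReal ((2 / 3) ^ n) := by gcongr
      _ = ENNReal.ofReal ((2 / 3) ^ (n + 1)) := by
        rw [← ENNReal.ofReal_mul (by positivity)]
        ring_nf

theorem volume_cantorSet : volume cantorSet = 0 := by
  refine le_antisymm (ge_of_tendsto' (x := atTop) ?_ fun n =>
    (measure_mono (iInter_subset _ n)).trans (volume_preCantorSet_le n)) zero_le
  simpa using ENNReal.tendsto_ofReal (tendsto_pow_atTop_nhds_zero_of_lt_one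
    (by norm_num : (0 : ℝ) ≤ 2 / 3) (by norm_num))

theorem volume_abs_preimage_cantorSet : volume (abs ⁻¹' cantorSet) = 0 := by
  refine measure_mono_null (fun x hx => ?_) (measure_union_null volume_cantorSet
    ((Measure.measure_neg volume cantorSet).trans volume_cantorSet))
  rcases abs_choice x with h | h
  · exact Or.inl (h ▸ hx)
  · exact Or.inr (show -x ∈ cantorSet from h ▸ hx)

open Classical in
def firstTrueTail (b : ℕ → Bool) : ℕ → Bool :=
  if h : ∃ k, b k = true then fun i => b (Nat.find h + 1 + i) else b

def trueAfterFalses (k : ℕ) (q : ℕ → Bool) : ℕ → Bool :=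
  fun i => if i < k then false else if i = k then true else q (i - (k + 1))

theorem firstTrueTail_trueAfterFalses (k : ℕ) (q : ℕ → Bool) :
    firstTrueTail (trueAfterFalses k q) = q := by
  have h : ∃ i, trueAfterFalses k q i = true := ⟨k, by simp [trueAfterFalses]⟩
  have hk : Nat.find h = k := (Nat.find_eq_iff h).2 ⟨by simp [trueAfterFalses],
    fun i hi => by simp [trueAfterFalses, hi]⟩
  funext i
  rw [firstTrueTail, dif_pos h, hk]
  simp only [trueAfterFalses]
  rw [if_neg (by omega), if_neg (by omega)]
  congr 1
  omega

def cantorTail (x : ℝ) : ℕ → Bool := firstTrueTail (cantorToBinary x).get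

theorem exists_mem_cantorSet_cantorTail_eq (q : ℕ → Bool) {ε : ℝ} (hε : 0 < ε) :
    ∃ x ∈ cantorSet, x ∈ Ioo 0 ε ∧ cantorTail x = q := by
  obtain ⟨k, hk⟩ := exists_pow_lt_of_lt_one hε (by norm_num : (3 : ℝ)⁻¹ < 1)
  set b := trueAfterFalses k q
  refine ⟨cantorSetEquivNatToBool.symm b, (cantorSetEquivNatToBool.symm b).2, ⟨?_, ?_⟩,
    (congrArg firstTrueTail (cantorSetEquivNatToBool.apply_symm_apply b)).trans
      (firstTrueTail_trueAfterFalses k q)⟩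
  · refine lt_of_lt_of_le ?_ (summable_ofDigitsTerm.le_tsum k fun _ _ => ofDigitsTerm_nonneg)
    simp [ofDigitsTerm, b, trueAfterFalses]
  · have hle := abs_ofDigits_sub_ofDigits_le (y := fun _ : ℕ => (0 : Fin 3)) (n := k)
      (x := fun i => cond (b i) 2 0) fun i hi => by simp [b, trueAfterFalses, hi]
    have h₀ : ofDigits (fun _ : ℕ => (0 : Fin 3)) = 0 := by simp [ofDigits, ofDigitsTerm]
    rw [h₀, sub_zero, abs_of_nonneg (ofDigits_nonneg _)] at hle
    exact hle.trans_lt (by simpa using hk)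

/-! ### Trace assignments -/

def TraceAssignment (X I : Type*) : Type _ := Σ E : Finset X, (Set E → I)

def TraceAssignment.apply {X I : Type*} (p : TraceAssignment X I) (J : Set X) : I :=
  p.2 ((↑) ⁻¹' J)

theorem TraceAssignment.exists_apply_eq {X I : Type*} [Nonempty I] {n : ℕ} {J : Fin n → Set X}
    (hJ : Function.Injective J) (v : Fin n → I) :
    ∃ p : TraceAssignment X I, ∀ l, p.apply (J l) = v l := by
  classical
  have hsep (q : {q : Fin n × Fin n // q.1 ≠ q.2}) : ∃ t, ¬(t ∈ J q.1.1 ↔ t ∈ J q.1.2) := by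
    by_contra! h
    exact q.2 (hJ (Set.ext h))
  choose w hw using hsep
  set E : Finset X := Finset.univ.image w
  set trace : Fin n → Set E := fun l => (↑) ⁻¹' J l
  have htrace : Function.Injective trace := by
    intro l l' h
    by_contra hne
    have hmem : w ⟨(l, l'), hne⟩ ∈ E := Finset.mem_image_of_mem w (Finset.mem_univ _)
    exact hw ⟨(l, l'), hne⟩ (Set.ext_iff.1 h ⟨_, hmem⟩)
  exact ⟨⟨E, Function.extend trace v fun _ => Classical.arbitrary I⟩,
    fun l => htrace.extend_apply v (fun _ => Classical.arbitrary I) l⟩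

theorem TraceAssignment.mk_le_continuum {I : Type} (hI : #I ≤ 𝔠) :
    #(TraceAssignment ℝ I) ≤ 𝔠 := by
  rw [TraceAssignment, mk_sigma]
  refine (sum_le_sum _ (fun _ => 𝔠) fun E => ?_).trans ?_
  · rw [← power_def]
    calc #I ^ #(Set E) ≤ 𝔠 ^ #(Set E) := power_le_power_right hI
      _ ≤ 𝔠 ^ ℵ₀ := power_le_power_left continuum_ne_zero (lt_aleph0_of_finite _).le
      _ = 𝔠 := continuum_power_aleph0
  · rw [sum_const', mk_finset_of_infinite, mk_real, mul_eq_self aleph0_le_continuum]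

theorem exists_surjective_natBool_traceAssignment :
    ∃ s : (ℕ → Bool) → TraceAssignment ℝ (Icc (0 : ℝ) 1), Function.Surjective s := by
  have : Nonempty (TraceAssignment ℝ (Icc (0 : ℝ) 1)) := ⟨⟨∅, fun _ => ⟨0, by norm_num⟩⟩⟩
  obtain ⟨e⟩ : Nonempty (TraceAssignment ℝ (Icc (0 : ℝ) 1) ↪ (ℕ → Bool)) := by
    rw [← Cardinal.le_def]
    refine (TraceAssignment.mk_le_continuum (mk_Icc_real zero_lt_one).le).trans_eq ?_
    rw [← two_power_aleph0, ← mk_bool, ← mk_nat, power_def]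
  exact ⟨Function.invFun e, Function.invFun_surjective e.injective⟩

/-! ### Functions carried by `±cantorSet` -/

def labelOfCode : (ℕ → Bool) → TraceAssignment ℝ (Icc (0 : ℝ) 1) :=
  exists_surjective_natBool_traceAssignment.choose

open Classical in
def cantorFun (J : Set ℝ) (x : ℝ) : ℝ :=
  if |x| ∈ cantorSet ∧ x ≠ 0 then (labelOfCode (cantorTail |x|)).apply J else 0

theorem cantorFun_mem_Icc (J : Set ℝ) (x : ℝ) : cantorFun J x ∈ Icc 0 1 := by
  unfold cantorFun
  split_ifs
  exacts [Subtype.mem _, ⟨le_rfl, zero_le_one⟩]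

theorem cantorFun_zero (J : Set ℝ) : cantorFun J 0 = 0 := by
  simp [cantorFun]

theorem exists_cantorFun_eq (p : TraceAssignment ℝ (Icc (0 : ℝ) 1)) {ε : ℝ} (hε : 0 < ε) :
    ∃ t ∈ Ioo 0 ε, ∀ J, cantorFun J t = p.apply J ∧ cantorFun J (-t) = p.apply J := by
  obtain ⟨q, rfl⟩ := exists_surjective_natBool_traceAssignment.choose_spec p
  obtain ⟨t, htC, ht, hq⟩ := exists_mem_cantorSet_cantorTail_eq q hε
  refine ⟨t, ht, fun J => ?_⟩
  have habs : |t| = t := abs_of_pos ht.1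
  simp [cantorFun, habs, htC, ht.1.ne', hq, labelOfCode]

theorem cantorFun_injective : Function.Injective cantorFun := by
  intro J J' h
  by_contra hne
  have hJ : Function.Injective ![J, J'] := by
    intro i j hij
    fin_cases i <;> fin_cases j <;> simp_all [eq_comm]
  obtain ⟨p, hp⟩ := TraceAssignment.exists_apply_eq hJ
    ![(⟨1, by norm_num⟩ : Icc (0 : ℝ) 1), ⟨0, by norm_num⟩]
  obtain ⟨t, -, hpt⟩ := exists_cantorFun_eq p one_pos
  have h₀ : p.apply J = ⟨1, _⟩ := hp 0
  have h₁ : p.apply J' = ⟨0, _⟩ := hp 1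
  have := congrFun h t
  rw [(hpt J).1, (hpt J').1, h₀, h₁] at this
  exact one_ne_zero this

theorem exists_eval_cantorFun_eq_near_zero {n : ℕ} {J : Fin n → Set ℝ}
    (hJ : Function.Injective J) {P : MvPolynomial (Fin n) ℝ} (hP : P ≠ 0) :
    ∃ δ ≠ 0, ∀ ε > 0, ∃ t ∈ Ioo 0 ε,
      eval (fun i => cantorFun (J i) t) P = δ ∧ eval (fun i => cantorFun (J i) (-t)) P = δ := by
  obtain ⟨v, hv, hPv⟩ : ∃ v ∈ univ.pi fun _ => Ioo (0 : ℝ) 1, eval v P ≠ 0 := by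
    by_contra! h
    exact hP (funext_set _ (fun _ => Ioo_infinite zero_lt_one) (by simpa using h))
  obtain ⟨p, hp⟩ := TraceAssignment.exists_apply_eq hJ
    fun i => (⟨v i, Ioo_subset_Icc_self (hv i trivial)⟩ : Icc (0 : ℝ) 1)
  refine ⟨eval v P, hPv, fun ε hε => ?_⟩
  obtain ⟨t, ht, hpt⟩ := exists_cantorFun_eq p hε
  have hvt : (fun i => cantorFun (J i) t) = v := funext fun i => by rw [(hpt (J i)).1, hp]
  have hvt' : (fun i => cantorFun (J i) (-t)) = v := funext fun i => by rw [(hpt (J i)).2, hp]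
  exact ⟨t, ht, by rw [hvt], by rw [hvt']⟩

theorem eval_cantorFun_ne_zero {n : ℕ} {J : Fin n → Set ℝ} (hJ : Function.Injective J)
    {P : MvPolynomial (Fin n) ℝ} (hP : P ≠ 0) :
    (fun x => eval (fun i => cantorFun (J i) x) P) ≠ 0 := by
  obtain ⟨δ, hδ, h⟩ := exists_eval_cantorFun_eq_near_zero hJ hP
  obtain ⟨t, -, ht, -⟩ := h 1 one_pos
  exact fun h₀ => hδ (ht ▸ congrFun h₀ t)

theorem riemannIntegrableOn_eval_cantorFun {n : ℕ} (J : Fin n → Set ℝ)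
    {P : MvPolynomial (Fin n) ℝ} (hP : constantCoeff P = 0) (a b : ℝ) :
    RiemannIntegrableOn (fun x => eval (fun i => cantorFun (J i) x) P) a b := by
  have hcube : IsCompact (univ.pi fun _ : Fin n => Icc (0 : ℝ) 1) :=
    isCompact_univ_pi fun _ => isCompact_Icc
  obtain ⟨M, hM⟩ := hcube.exists_bound_of_continuousOn (continuous_eval P).continuousOn
  refine riemannIntegrableOn_of_eq_zero_off (isClosed_cantorSet.preimage continuous_abs)
    volume_abs_preimage_cantorSet (fun x hx => ?_)
    ⟨M, fun x _ => hM _ fun i _ => cantorFun_mem_Icc _ _⟩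
  have hx' : |x| ∉ cantorSet := hx
  have : (fun i => cantorFun (J i) x) = fun _ => 0 := funext fun i => by simp [cantorFun, hx']
  rw [this, eval_zero', hP]

theorem not_riemannIntegrableI_eval_cantorFun_eval_distExpOn {n m : ℕ} {J : Fin n → Set ℝ}
    (hJ : Function.Injective J) {a : Fin m → ℝ} (ha : LinearIndependent ℚ a)
    {P : MvPolynomial (Fin n) ℝ} (hP : P ≠ 0) (hP₀ : constantCoeff P = 0)
    {Q : MvPolynomial (Fin m) ℝ} (hQ : Q ≠ 0) (hQ₀ : constantCoeff Q = 0) :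
    ¬ RiemannIntegrableI fun x =>
      eval (fun i => cantorFun (J i) (eval (fun j => distExpOn (a j) x) Q)) P := by
  obtain ⟨δ, hδ, hr⟩ := exists_eval_cantorFun_eq_near_zero hJ hP
  refine not_riemannIntegrableI_of_not_continuousAt volume_fatCantor_ne_zero
    (fatCantor_subset_Ioo.trans Ioo_subset_Icc_self) fun x hx hc => ?_
  refine not_continuousAt_comp_of_eq_near_zero (r := fun t => eval (fun i => cantorFun (J i) t) P)
    (continuous_eval_distExp _ a Q) (eval_distExp_of_mem hQ₀ hx)
    (fun ε hε => exists_eval_distExp_ne_zero isClosed_fatCantor fatCantor_nonempty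
      dense_compl_fatCantor ha hQ x hε)
    (by simp [cantorFun_zero, eval_zero', hP₀]) hδ hr
    (ContinuousAt.of_restrict_Icc (fatCantor_subset_Ioo hx) hc)

/-! ### Hamel basis -/

def hamelBasis : Set ℝ := Module.Basis.ofVectorSpaceIndex ℚ ℝ

theorem linearIndependent_hamelBasis : LinearIndependent ℚ ((↑) : hamelBasis → ℝ) :=
  Module.Basis.ofVectorSpaceIndex.linearIndependent ℚ ℝ

theorem mk_hamelBasis : #hamelBasis = 𝔠 := by
  rw [hamelBasis, (Module.Basis.ofVectorSpace ℚ ℝ).mk_eq_rank'', Real.rank_rat_real]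

theorem Function.Injective.exists_injective_eq_comp {ι α β : Type*} {g : α → β} {f : ι → β}
    (hf : ∀ i, f i ∈ range g) (hinj : Function.Injective f) :
    ∃ J : ι → α, Function.Injective J ∧ f = g ∘ J := by
  obtain ⟨J, rfl⟩ := range_subset_range_iff_exists_comp.1 (range_subset_iff.2 hf)
  exact ⟨J, hinj.of_comp, rfl⟩

end

/-- There exist a set `S ⊆ ℝ^ℝ` of cardinality `2^𝔠`, algebraically independent over `ℝ`,
all of whose generated (non-unital) algebra consists of functions Riemann integrable
(in particular bounded) on every compact interval `[α,β]`, and a set `C` of continuous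
functions on `[0,1]` of cardinality `𝔠`, algebraically independent over `ℝ`, such that
for every nonzero element `r` of the algebra generated by `S` and every nonzero element
`c` of the algebra generated by `C`, the composite `r ∘ c` is not Riemann integrable
on `[0,1]`. -/
theorem composite_not_riemann_integrable_algebrability :
    ∃ (S : Set (ℝ → ℝ)) (C : Set (Set.Icc (0:ℝ) 1 → ℝ)),
      (#S) = 2 ^ Cardinal.continuum ∧
      (#C) = Cardinal.continuum ∧
      (∀ c ∈ C, Continuous c) ∧
      -- S is algebraically independent over ℝ
      (∀ (n : ℕ) (f : Fin n → (ℝ → ℝ)), Function.Injective f → (∀ i, f i ∈ S) →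
        ∀ P : MvPolynomial (Fin n) ℝ, P ≠ 0 → MvPolynomial.constantCoeff P = 0 →
          (fun x : ℝ => MvPolynomial.eval (fun i => f i x) P) ≠ 0) ∧
      -- C is algebraically independent over ℝ
      (∀ (n : ℕ) (c : Fin n → (Set.Icc (0:ℝ) 1 → ℝ)), Function.Injective c →
        (∀ i, c i ∈ C) →
        ∀ Q : MvPolynomial (Fin n) ℝ, Q ≠ 0 → MvPolynomial.constantCoeff Q = 0 →
          (fun x : Set.Icc (0:ℝ) 1 => MvPolynomial.eval (fun i => c i x) Q) ≠ 0) ∧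
      -- every element of the algebra generated by S is bounded on every compact interval
      -- and its restriction to every interval [α,β] is Riemann integrable
      (∀ (n : ℕ) (f : Fin n → (ℝ → ℝ)), Function.Injective f → (∀ i, f i ∈ S) →
        ∀ P : MvPolynomial (Fin n) ℝ, MvPolynomial.constantCoeff P = 0 →
          ∀ α β : ℝ,
            RiemannIntegrableOn (fun x : ℝ => MvPolynomial.eval (fun i => f i x) P) α β) ∧
      -- for r in the algebra generated by S and c in the algebra generated by C,
      -- both nonzero, the composite r ∘ c is not Riemann integrable on [0,1]
      (∀ (n m : ℕ) (f : Fin n → (ℝ → ℝ)) (c : Fin m → (Set.Icc (0:ℝ) 1 → ℝ)),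
        Function.Injective f → (∀ i, f i ∈ S) →
        Function.Injective c → (∀ j, c j ∈ C) →
        ∀ P : MvPolynomial (Fin n) ℝ, P ≠ 0 → MvPolynomial.constantCoeff P = 0 →
        ∀ Q : MvPolynomial (Fin m) ℝ, Q ≠ 0 → MvPolynomial.constantCoeff Q = 0 →
          ¬ RiemannIntegrableI (fun x : Set.Icc (0:ℝ) 1 =>
              MvPolynomial.eval
                (fun i => f i (MvPolynomial.eval (fun j => c j x) Q)) P)) := by
  refine ⟨range cantorFun, range fun b : hamelBasis => distExpOn b, ?_, ?_, ?_, ?_, ?_, ?_, ?_⟩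
  · rw [mk_range_eq _ cantorFun_injective, mk_set, mk_real]
  · rw [mk_range_eq (fun b : hamelBasis => distExpOn b)
      (distExpOn_injective.comp Subtype.val_injective), mk_hamelBasis]
  · rintro _ ⟨b, rfl⟩
    exact continuous_distExpOn b
  · intro n f hfinj hfS P hP _
    obtain ⟨J, hJ, rfl⟩ := hfinj.exists_injective_eq_comp hfS
    exact eval_cantorFun_ne_zero hJ hP
  · intro m c hcinj hcC Q hQ _
    obtain ⟨b, hb, rfl⟩ := hcinj.exists_injective_eq_comp hcC
    exact eval_distExpOn_ne_zero (linearIndependent_hamelBasis.comp b hb) hQ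
  · intro n f hfinj hfS P hP α β
    obtain ⟨J, -, rfl⟩ := hfinj.exists_injective_eq_comp hfS
    exact riemannIntegrableOn_eval_cantorFun J hP α β
  · intro n m f c hfinj hfS hcinj hcC P hP hP₀ Q hQ hQ₀
    obtain ⟨J, hJ, rfl⟩ := hfinj.exists_injective_eq_comp hfS
    obtain ⟨b, hb, rfl⟩ := hcinj.exists_injective_eq_comp hcC
    exact not_riemannIntegrableI_eval_cantorFun_eval_distExpOn hJ
      (linearIndependent_hamelBasis.comp b hb) hP hP₀ hQ hQ₀
end

section
/- The set of bounded functions from [0,1] to ℝ is strongly 2^𝔠-algebrable; that is, there exists a family F of bounded functions from [0,1] to ℝ with cardinality 2^𝔠 that is algebraically independent over ℝ: for every n ∈ ℕ, every nonzero real polynomial P in n variables without constant term, and all distinct f₁,…,fₙ ∈ F, the function x ↦ P(f₁(x),…,fₙ(x)) is not identically zero on [0,1] (and is bounded). -/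
open Set Cardinal

/-!
Points of `[0,1]` can code pairs `(s, g)` of a finite set `s ⊆ ℝ` and a finitely supported
`g : Finset ℝ →₀ ℝ`, since there are only `𝔠` of them. For `A ⊆ ℝ` let `f_A (s, g)` be
`g (s ∩ A)` squashed into `(-1, 1)`. Finitely many distinct sets `A₁, …, Aₙ` are already
distinguished by their traces on a suitable finite `s`, and then `g` may prescribe the values
on these traces freely: so `x ↦ (f_{A₁} x, …, f_{Aₙ} x)` maps onto the cube `(-1, 1)ⁿ`. A nonzero
polynomial does not vanish on this cube, and is bounded on its closure.
-/

namespace MvPolynomial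

theorem exists_mem_pi_eval_ne_zero {R σ : Type*} [CommRing R] [IsDomain R]
    {P : MvPolynomial σ R} (hP : P ≠ 0) (s : σ → Set R) (hs : ∀ i, (s i).Infinite) :
    ∃ v ∈ pi univ s, eval v P ≠ 0 := by
  by_contra! h
  exact hP (funext_set s hs fun v hv => by simp [h v hv])

theorem exists_bound_abs_eval {σ : Type*} (P : MvPolynomial σ ℝ) (r : ℝ) :
    ∃ M, ∀ v : σ → ℝ, (∀ i, |v i| ≤ r) → |eval v P| ≤ M := by
  have hcube : IsCompact (pi univ fun _ : σ => Icc (-r) r) :=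
    isCompact_univ_pi fun _ => isCompact_Icc
  obtain ⟨M, hM⟩ := hcube.exists_bound_of_continuousOn (continuous_eval P).continuousOn
  exact ⟨M, fun v hv => hM v fun i _ => abs_le.1 (hv i)⟩

end MvPolynomial

section Trace

variable {α β ι : Type*}

open Classical in
noncomputable def traceEval [Zero β] (A : Set α) (p : Finset α × (Finset α →₀ β)) : β :=
  p.2 {a ∈ p.1 | a ∈ A}

open Classical in
theorem exists_finset_injective_filter_mem [Finite ι] {A : ι → Set α}
    (hA : Function.Injective A) :
    ∃ s : Finset α, Function.Injective fun i => {a ∈ s | a ∈ A i} := by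
  cases nonempty_fintype ι
  have hsep : ∀ i j, ∃ t : Finset α, (∀ a ∈ t, a ∈ A i ↔ a ∈ A j) → A i = A j := by
    intro i j
    by_cases hij : A i = A j
    · exact ⟨∅, fun _ => hij⟩
    · obtain ⟨a, ha⟩ := not_forall.1 (mt Set.ext hij)
      exact ⟨{a}, fun h => absurd (h a (Finset.mem_singleton_self a)) ha⟩
  choose t ht using hsep
  refine ⟨Finset.univ.biUnion fun ij : ι × ι => t ij.1 ij.2, fun i j hij => hA (ht i j ?_)⟩
  intro a ha
  have hmem : a ∈ Finset.univ.biUnion fun ij : ι × ι => t ij.1 ij.2 :=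
    Finset.mem_biUnion.2 ⟨(i, j), Finset.mem_univ _, ha⟩
  simpa [hmem] using Finset.ext_iff.1 hij a

theorem exists_traceEval_eq [Finite ι] [Zero β] {A : ι → Set α}
    (hA : Function.Injective A) (v : ι → β) : ∃ p, ∀ i, traceEval (A i) p = v i := by
  obtain ⟨s, hs⟩ := exists_finset_injective_filter_mem hA
  refine ⟨(s, Finsupp.embDomain ⟨_, hs⟩ (Finsupp.equivFunOnFinite.symm v)), fun i => ?_⟩
  exact Finsupp.embDomain_apply_self _ _ i

theorem traceEval_injective [Zero β] [Nontrivial β] :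
    Function.Injective (traceEval (α := α) (β := β)) := by
  intro A B hAB
  by_contra hne
  obtain ⟨b₁, b₂, hb⟩ := exists_pair_ne β
  have hinj : Function.Injective ![A, B] := by
    intro i j
    fin_cases i <;> fin_cases j <;> simp [hne, Ne.symm hne]
  obtain ⟨p, hp⟩ := exists_traceEval_eq hinj ![b₁, b₂]
  have h0 := hp 0
  have h1 := hp 1
  simp only [Fin.isValue, Matrix.cons_val_zero, Matrix.cons_val_one, hAB] at h0 h1
  exact hb (h0.symm.trans h1)

end Trace

theorem mk_finset_prod_finsupp_real : #(Finset ℝ × (Finset ℝ →₀ ℝ)) = 𝔠 := by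
  rw [mk_prod, lift_id, lift_id, mk_finsupp_of_infinite, mk_finset_of_infinite, mk_real,
    max_self, mul_eq_self aleph0_le_continuum]

section SquashedTrace

variable {X : Type*} (e : Finset ℝ × (Finset ℝ →₀ ℝ) ↪ X)

noncomputable def squashedTrace (A : Set ℝ) (x : X) : ℝ :=
  orderIsoIooNegOneOne ℝ (traceEval A (Function.invFun e x))

theorem squashedTrace_mem_Ioo (A : Set ℝ) (x : X) : squashedTrace e A x ∈ Ioo (-1) 1 :=
  Subtype.prop _

theorem squashedTrace_injective : Function.Injective (squashedTrace e) := by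
  intro A B hAB
  refine traceEval_injective (funext fun p => (orderIsoIooNegOneOne ℝ).injective ?_)
  apply Subtype.ext
  simpa [squashedTrace, Function.leftInverse_invFun e.injective p] using congrFun hAB (e p)

theorem exists_squashedTrace_eq {ι : Type*} [Finite ι] {A : ι → Set ℝ}
    (hA : Function.Injective A) (v : ι → Ioo (-1 : ℝ) 1) :
    ∃ x, ∀ i, squashedTrace e (A i) x = v i := by
  obtain ⟨p, hp⟩ := exists_traceEval_eq hA fun i => (orderIsoIooNegOneOne ℝ).symm (v i)
  refine ⟨e p, fun i => ?_⟩
  simp [squashedTrace, Function.leftInverse_invFun e.injective p, hp]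

end SquashedTrace

/-- The set of bounded functions from `[0,1]` to `ℝ` is strongly `2^𝔠`-algebrable:
there is a family `F` of bounded functions on `[0,1]` of cardinality `2^𝔠` which is
algebraically independent over `ℝ`, i.e. for every `n`, every nonzero real polynomial
`P` in `n` variables without constant term and all distinct `f₁, …, fₙ ∈ F`, the
function `x ↦ P(f₁(x), …, fₙ(x))` is not identically zero (and is bounded). -/
theorem bounded_functions_strongly_algebrable :
    ∃ F : Set (Set.Icc (0:ℝ) 1 → ℝ),
      (#F) = 2 ^ Cardinal.continuum ∧
      (∀ f ∈ F, ∃ M : ℝ, ∀ x, |f x| ≤ M) ∧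
      (∀ (n : ℕ) (f : Fin n → (Set.Icc (0:ℝ) 1 → ℝ)), Function.Injective f →
        (∀ i, f i ∈ F) →
        ∀ P : MvPolynomial (Fin n) ℝ, P ≠ 0 → MvPolynomial.constantCoeff P = 0 →
          (fun x : Set.Icc (0:ℝ) 1 => MvPolynomial.eval (fun i => f i x) P) ≠ 0 ∧
          ∃ M : ℝ, ∀ x : Set.Icc (0:ℝ) 1,
            |MvPolynomial.eval (fun i => f i x) P| ≤ M) := by
  obtain ⟨e⟩ : Nonempty (Finset ℝ × (Finset ℝ →₀ ℝ) ↪ Icc (0:ℝ) 1) := by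
    rw [← le_def, mk_finset_prod_finsupp_real, mk_Icc_real zero_lt_one]
  have abs_le_one A x : |squashedTrace e A x| ≤ 1 := (abs_lt.2 (squashedTrace_mem_Ioo e A x)).le
  refine ⟨range (squashedTrace e), ?_, ?_, fun n f hf hfF P hP _ => ?_⟩
  · rw [mk_range_eq _ (squashedTrace_injective e), mk_set, mk_real]
  · rintro _ ⟨A, rfl⟩
    exact ⟨1, abs_le_one A⟩
  choose A hA using hfF
  have hAinj : Function.Injective A := fun i j h => hf (by rw [← hA i, ← hA j, h])
  refine ⟨fun hzero => ?_, ?_⟩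
  · obtain ⟨v, hv, hPv⟩ := MvPolynomial.exists_mem_pi_eval_ne_zero hP (fun _ => Ioo (-1) 1)
      fun _ => Ioo_infinite (by norm_num)
    obtain ⟨x, hx⟩ := exists_squashedTrace_eq e hAinj fun i => ⟨v i, hv i trivial⟩
    have hvx : v = fun i => f i x := funext fun i => by rw [← hA i, hx]
    exact hPv (hvx ▸ congrFun hzero x)
  · obtain ⟨M, hM⟩ := MvPolynomial.exists_bound_abs_eval P 1
    exact ⟨M, fun x => hM _ fun i => hA i ▸ abs_le_one _ _⟩
end

section
/- (Fichtenholz–Kantorovich–Hausdorff) For any infinite set X there exists an independent family A of subsets of X with cardinality 2^{card(X)}. -/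
/-!
Hausdorff's construction. Put `P := Finset X × Finset (Finset X)`, which has cardinality `#X`
when `X` is infinite, and send `S ⊆ X` to the set of pairs `(F, 𝓕) ∈ P` with `S ∩ F ∈ 𝓕`.
Finitely many distinct sets `S₁, …, Sₙ` are already told apart by their traces on a suitable
finite `F`, so choosing `𝓕` to be the traces of exactly those `Sᵢ` with `εᵢ = 1` yields a
point of `S₁^{ε₁} ∩ ⋯ ∩ Sₙ^{εₙ}`. This gives `2^{#X}` independent subsets of `P`, which are
transported to `X` along a bijection `P ≃ X`.
-/

open Set Cardinal

/-- A family `𝒜` of subsets of `X` is independent if for any finitely many distinct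
members `A₁, …, Aₙ` of `𝒜` and any signs `ε₁, …, εₙ ∈ {0,1}`, the intersection
`A₁^{ε₁} ∩ ⋯ ∩ Aₙ^{εₙ}` is nonempty (where `A¹ = A` and `A⁰ = X \ A`). -/
def IsIndependentFamily {X : Type*} (𝒜 : Set (Set X)) : Prop :=
  ∀ (n : ℕ) (A : Fin n → Set X), Function.Injective A → (∀ i, A i ∈ 𝒜) →
    ∀ ε : Fin n → Bool, (⋂ i, if ε i then A i else (A i)ᶜ).Nonempty

theorem isIndependentFamily_range {ι X : Type*} {f : ι → Set X}
    (hf : ∀ (n : ℕ) (S : Fin n → ι), Function.Injective S → ∀ ε : Fin n → Bool,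
      ∃ x, ∀ i, x ∈ f (S i) ↔ ε i = true) :
    IsIndependentFamily (range f) := by
  intro n A hA hA_mem ε
  choose S hS using hA_mem
  have hS_inj : Function.Injective S := fun i j h => hA (by rw [← hS i, ← hS j, h])
  obtain ⟨x, hx⟩ := hf n S hS_inj ε
  refine ⟨x, mem_iInter.mpr fun i => ?_⟩
  rw [← hS i]
  cases h : ε i <;> simpa [h] using hx i

theorem Cardinal.mk_finset_prod_finset_finset (X : Type*) [Infinite X] :
    #(Finset X × Finset (Finset X)) = #X := by
  rw [mk_prod, mk_finset_of_infinite, mk_finset_of_infinite, mk_finset_of_infinite, lift_id,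
    mul_eq_self (aleph0_le_mk X)]

section HausdorffSet

open scoped Classical

variable {X : Type*}

noncomputable def hausdorffSet (S : Set X) : Set (Finset X × Finset (Finset X)) :=
  {p | p.1.filter (· ∈ S) ∈ p.2}

theorem exists_finset_injective_filter {ι : Type*} [Finite ι] {S : ι → Set X}
    (hS : Function.Injective S) :
    ∃ F : Finset X, Function.Injective fun i => F.filter (· ∈ S i) := by
  have : Fintype ι := Fintype.ofFinite ι
  have h_sep : ∀ p : {p : ι × ι // p.1 ≠ p.2}, ∃ x, ¬(x ∈ S p.1.1 ↔ x ∈ S p.1.2) :=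
    fun p => not_forall.mp fun h => p.2 (hS (Set.ext h))
  choose w hw using h_sep
  refine ⟨Finset.univ.image w, fun i j hij => ?_⟩
  by_contra hne
  have hw_mem : w ⟨(i, j), hne⟩ ∈ Finset.univ.image w := Finset.mem_image_of_mem _ (by simp)
  have := Finset.ext_iff.mp hij (w ⟨(i, j), hne⟩)
  simp only [Finset.mem_filter, hw_mem, true_and] at this
  exact hw ⟨(i, j), hne⟩ this

theorem exists_forall_mem_hausdorffSet_iff {n : ℕ} {S : Fin n → Set X}
    (hS : Function.Injective S) (ε : Fin n → Bool) :
    ∃ p, ∀ i, p ∈ hausdorffSet (S i) ↔ ε i = true := by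
  obtain ⟨F, hF⟩ := exists_finset_injective_filter hS
  refine ⟨(F, (Finset.univ.filter (ε · = true)).image fun i => F.filter (· ∈ S i)), fun i => ?_⟩
  simp only [hausdorffSet, mem_ofPred_eq, Finset.mem_image, Finset.mem_filter, Finset.mem_univ,
    true_and, hF.eq_iff, exists_eq_right]

theorem hausdorffSet_injective : Function.Injective (hausdorffSet (X := X)) := by
  intro S T h
  by_contra hST
  obtain ⟨p, hp⟩ :=
    exists_forall_mem_hausdorffSet_iff (injective_pair_iff_ne.mpr hST) ![true, false]
  have hS : p ∈ hausdorffSet S := (hp 0).mpr rfl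
  simpa [← h, hS] using hp 1

end HausdorffSet

/-- Fichtenholz–Kantorovich–Hausdorff: every infinite set `X` admits an independent
family of subsets of cardinality `2^{card X}`. -/
theorem fichtenholz_kantorovich_hausdorff (X : Type*) [Infinite X] :
    ∃ 𝒜 : Set (Set X), (#𝒜) = 2 ^ (#X) ∧ IsIndependentFamily 𝒜 := by
  obtain ⟨e⟩ := Cardinal.eq.mp (mk_finset_prod_finset_finset X)
  have h_inj : Function.Injective fun S : Set X => e '' hausdorffSet S :=
    (image_injective.mpr e.injective).comp hausdorffSet_injective
  refine ⟨range fun S => e '' hausdorffSet S, by rw [mk_range_eq _ h_inj, mk_set], ?_⟩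
  refine isIndependentFamily_range fun n S hS ε => ?_
  obtain ⟨p, hp⟩ := exists_forall_mem_hausdorffSet_iff hS ε
  exact ⟨e p, by simpa [e.injective.mem_set_image] using hp⟩
end

section
/- Let X be an infinite set and let A be an independent family of subsets of X of cardinality 2^{card(X)}. Then for every n ∈ ℕ, all distinct A₁,…,Aₙ ∈ A, and all ε₁,…,εₙ ∈ {0,1}, the intersection A₁^{ε₁} ∩ ⋯ ∩ Aₙ^{εₙ} is infinite. -/
open Set Cardinal

/-!
If `S = A₁^{ε₁} ∩ ⋯ ∩ Aₙ^{εₙ}` were finite, then, since `𝒜` is infinite, two distinct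
members `B ≠ B'` of `𝒜` outside `{A₁, …, Aₙ}` would have the same trace `B ∩ S = B' ∩ S`.
But independence gives a point of `S ∩ B \ B'`.
-/

namespace IsIndependentFamily

variable {X : Type*} {𝒜 : Set (Set X)}

theorem injOn_inter_iInter (hind : IsIndependentFamily 𝒜) {n : ℕ} {A : Fin n → Set X}
    (hinj : Function.Injective A) (hmem : ∀ i, A i ∈ 𝒜) (ε : Fin n → Bool) :
    InjOn (· ∩ ⋂ i, if ε i then A i else (A i)ᶜ) (𝒜 \ range A) := by
  rintro B ⟨hB, hBA⟩ B' ⟨hB', hB'A⟩ htrace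
  by_contra hne
  have hinj' : Function.Injective (Fin.cons B (Fin.cons B' A) : Fin (n + 2) → Set X) := by
    refine Fin.cons_injective_iff.2 ⟨?_, Fin.cons_injective_iff.2 ⟨hB'A, hinj⟩⟩
    rw [Fin.range_cons, mem_insert_iff, not_or]
    exact ⟨hne, hBA⟩
  have hmem' : ∀ i, (Fin.cons B (Fin.cons B' A) : Fin (n + 2) → Set X) i ∈ 𝒜 :=
    Fin.forall_fin_succ.2 ⟨hB, Fin.forall_fin_succ.2 ⟨hB', hmem⟩⟩
  obtain ⟨x, hx⟩ := hind (n + 2) _ hinj' hmem' (Fin.cons true (Fin.cons false ε))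
  simp only [mem_iInter, Fin.forall_fin_succ, Fin.cons_zero, Fin.cons_succ] at hx
  obtain ⟨hxB, hxB', hxS⟩ := hx
  exact hxB' (htrace.le ⟨hxB, mem_iInter.2 hxS⟩).1

theorem finite_of_finite_iInter (hind : IsIndependentFamily 𝒜) {n : ℕ} {A : Fin n → Set X}
    (hinj : Function.Injective A) (hmem : ∀ i, A i ∈ 𝒜) (ε : Fin n → Bool)
    (hfin : (⋂ i, if ε i then A i else (A i)ᶜ).Finite) : 𝒜.Finite := by
  have htraces : ((· ∩ ⋂ i, if ε i then A i else (A i)ᶜ) '' (𝒜 \ range A)).Finite :=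
    hfin.finite_subsets.subset (image_subset_iff.2 fun _ _ ↦ inter_subset_right)
  exact (htraces.of_finite_image (hind.injOn_inter_iInter hinj hmem ε)).of_sdiff (finite_range A)

end IsIndependentFamily

/-- If `X` is infinite and `𝒜` is an independent family of subsets of `X` of
cardinality `2^{card X}`, then all the finite Boolean intersections
`A₁^{ε₁} ∩ ⋯ ∩ Aₙ^{εₙ}` over distinct members of `𝒜` are infinite. -/
theorem independent_family_inter_infinite (X : Type*) [Infinite X]
    (𝒜 : Set (Set X)) (hcard : (#𝒜) = 2 ^ (#X)) (hind : IsIndependentFamily 𝒜)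
    (n : ℕ) (A : Fin n → Set X) (hinj : Function.Injective A) (hmem : ∀ i, A i ∈ 𝒜)
    (ε : Fin n → Bool) :
    (⋂ i, if ε i then A i else (A i)ᶜ).Infinite := by
  intro hfin
  have h𝒜 : 𝒜.Infinite :=
    infinite_coe_iff.1 <| Cardinal.infinite_iff.2 <| hcard ▸ (aleph0_le_mk X).trans (cantor _).le
  exact h𝒜 (hind.finite_of_finite_iInter hinj hmem ε hfin)
end

section
/- Let H be a Hamel basis of ℝ over ℚ with 1 ∈ H, and let A be an independent family of subsets of H \ {1} of cardinality 2^𝔠. For A ∈ A, let f_A : ℝ → ℝ be the ℚ-linear map with f_A(h) = 1 for h ∈ A and f_A(h) = 0 for h ∈ H \ A, and let g_A(x) = f_A(x)/(1 + |f_A(x)|). Then the restrictions of the functions g_A to [0,1] are algebraically independent over ℝ: for every n ∈ ℕ, all distinct A₁,…,Aₙ ∈ A, and every nonzero real polynomial P in n variables without constant term, there exists r ∈ [0,1] with P(g_{A₁}(r),…,g_{Aₙ}(r)) ≠ 0. -/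
open Set Cardinal

/-- A family `𝒜` of subsets of the ground set `X` is independent if for any finitely
many distinct members `A₁, …, Aₙ` of `𝒜` and any signs `ε₁, …, εₙ ∈ {0,1}`, the
intersection `A₁^{ε₁} ∩ ⋯ ∩ Aₙ^{εₙ}` is nonempty (where `A¹ = A` and `A⁰ = X \ A`). -/
def IsIndependentFamilyOn {α : Type*} (X : Set α) (𝒜 : Set (Set α)) : Prop :=
  ∀ (n : ℕ) (A : Fin n → Set α), Function.Injective A → (∀ i, A i ∈ 𝒜) →
    ∀ ε : Fin n → Bool, (⋂ i, if ε i then A i else X \ A i).Nonempty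

/-!
Every value `m / (1 + m)`, `m ∈ ℕ`, is a value of `g_A`, and these values form an infinite
set, so a nonzero polynomial `P` does not vanish at some point `(k₁/(1+k₁), …, kₙ/(1+kₙ))`.
Independence of the family gives points `vᵢ ∈ Aᵢ` outside all the other `Aⱼ`; then
`x = ∑ kᵢ vᵢ` satisfies `f_{Aⱼ}(x) = kⱼ`, and since `f_{Aⱼ}` is additive and kills `1`, the
same holds at `r = x - ⌊x⌋ ∈ [0, 1)`.
-/

lemma strictMono_natCast_div_one_add : StrictMono fun m : ℕ => (m : ℝ) / (1 + m) := by
  intro a b hab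
  have hab' : (a : ℝ) < b := by exact_mod_cast hab
  rw [div_lt_div_iff₀ (by positivity) (by positivity)]
  linarith

lemma MvPolynomial.exists_natCast_div_one_add_eval_ne_zero {σ : Type*}
    {P : MvPolynomial σ ℝ} (hP : P ≠ 0) :
    ∃ k : σ → ℕ, MvPolynomial.eval (fun i => (k i : ℝ) / (1 + k i)) P ≠ 0 := by
  by_contra! hzero
  have hS : (range fun m : ℕ => (m : ℝ) / (1 + m)).Infinite :=
    infinite_range_of_injective strictMono_natCast_div_one_add.injective
  refine hP (MvPolynomial.funext_set _ (fun _ => hS) fun x hx => ?_)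
  choose k hk using fun i => hx i trivial
  rw [map_zero, ← _root_.funext hk]
  exact hzero k

lemma IsIndependentFamilyOn.exists_mem_forall_ne_notMem {α : Type*} {X : Set α}
    {𝒜 : Set (Set α)} (hind : IsIndependentFamilyOn X 𝒜) {n : ℕ} {A : Fin n → Set α}
    (hA : Function.Injective A) (hA𝒜 : ∀ i, A i ∈ 𝒜) (i : Fin n) :
    ∃ y ∈ A i, ∀ j ≠ i, y ∉ A j := by
  obtain ⟨y, hy⟩ := hind n A hA hA𝒜 fun j => decide (j = i)
  rw [mem_iInter] at hy
  exact ⟨y, by simpa using hy i, fun j hj => (by simpa [hj] using hy j : y ∈ X \ A j).2⟩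

lemma AddMonoidHom.map_fract {G : Type*} [AddCommGroup G] (F : ℝ →+ G) (h1 : F 1 = 0)
    (x : ℝ) : F (Int.fract x) = F x := by
  rw [Int.fract, map_sub, ← zsmul_one, map_zsmul, h1, smul_zero, sub_zero]

lemma AddMonoidHom.map_sum_nsmul_of_apply_eq_ite {ι M R : Type*} [Fintype ι] [DecidableEq ι]
    [AddCommMonoid M] [Semiring R] (F : M →+ R) (v : ι → M) (j : ι)
    (hF : ∀ i, F (v i) = if i = j then 1 else 0) (k : ι → ℕ) :
    F (∑ i, k i • v i) = k j := by
  simp [map_sum, map_nsmul, hF]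

theorem gA_algebraically_independent_general (H : Set ℝ) (h1H : (1:ℝ) ∈ H)
    (𝒜 : Set (Set ℝ)) (hsub : ∀ A ∈ 𝒜, A ⊆ H \ {1})
    (hind : IsIndependentFamilyOn (H \ {1}) 𝒜)
    (f : Set ℝ → ℝ → ℝ)
    (hflin : ∀ A ∈ 𝒜, IsLinearMap ℚ (f A))
    (hfone : ∀ A ∈ 𝒜, ∀ h ∈ A, f A h = 1)
    (hfzero : ∀ A ∈ 𝒜, ∀ h ∈ H \ A, f A h = 0)
    (g : Set ℝ → ℝ → ℝ)
    (hg : ∀ A, ∀ x : ℝ, g A x = f A x / (1 + |f A x|)) :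
    ∀ (n : ℕ) (A : Fin n → Set ℝ), Function.Injective A → (∀ i, A i ∈ 𝒜) →
      ∀ P : MvPolynomial (Fin n) ℝ, P ≠ 0 → MvPolynomial.constantCoeff P = 0 →
        ∃ r ∈ Set.Icc (0:ℝ) 1, MvPolynomial.eval (fun i => g (A i) r) P ≠ 0 := by
  intro n A hinj hA P hP _
  obtain ⟨k, hk⟩ := P.exists_natCast_div_one_add_eval_ne_zero hP
  choose v hvA hvA' using hind.exists_mem_forall_ne_notMem hinj hA
  let F (j : Fin n) : ℝ →+ ℝ := AddMonoidHom.mk' (f (A j)) (hflin _ (hA j)).map_add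
  have hFv (j i : Fin n) : F j (v i) = if i = j then 1 else 0 := by
    split_ifs with hij
    · subst hij
      exact hfone _ (hA i) _ (hvA i)
    · exact hfzero _ (hA j) _ ⟨(hsub _ (hA i) (hvA i)).1, hvA' i j (Ne.symm hij)⟩
  have hF1 (j : Fin n) : F j 1 = 0 :=
    hfzero _ (hA j) 1 ⟨h1H, fun h1 => (hsub _ (hA j) h1).2 rfl⟩
  set r := Int.fract (∑ i, k i • v i)
  have hfr (j : Fin n) : f (A j) r = k j :=
    ((F j).map_fract (hF1 j) _).trans ((F j).map_sum_nsmul_of_apply_eq_ite v j (hFv j) k)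
  refine ⟨r, ⟨Int.fract_nonneg _, (Int.fract_lt_one _).le⟩, ?_⟩
  convert hk using 3
  ext j
  rw [hg, hfr, abs_of_nonneg (Nat.cast_nonneg _)]

/-- Let `H` be a Hamel basis of `ℝ` over `ℚ` with `1 ∈ H` and let `𝒜` be an
independent family of subsets of `H \ {1}` of cardinality `2^𝔠`. For `A ∈ 𝒜`, let
`f_A : ℝ → ℝ` be the `ℚ`-linear map with `f_A = 1` on `A` and `f_A = 0` on `H \ A`,
and let `g_A = f_A / (1 + |f_A|)`. Then the restrictions of the `g_A` to `[0,1]` are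
algebraically independent over `ℝ`: for all distinct `A₁, …, Aₙ ∈ 𝒜` and every
nonzero real polynomial `P` in `n` variables without constant term there is
`r ∈ [0,1]` with `P(g_{A₁}(r), …, g_{Aₙ}(r)) ≠ 0`. -/
theorem gA_algebraically_independent (H : Set ℝ) (h1H : (1:ℝ) ∈ H)
    (hLI : LinearIndependent ℚ (Subtype.val : H → ℝ))
    (hspan : Submodule.span ℚ H = ⊤)
    (𝒜 : Set (Set ℝ)) (hsub : ∀ A ∈ 𝒜, A ⊆ H \ {1})
    (hcard : (#𝒜) = 2 ^ Cardinal.continuum)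
    (hind : IsIndependentFamilyOn (H \ {1}) 𝒜)
    (f : Set ℝ → ℝ → ℝ)
    (hflin : ∀ A ∈ 𝒜, IsLinearMap ℚ (f A))
    (hfone : ∀ A ∈ 𝒜, ∀ h ∈ A, f A h = 1)
    (hfzero : ∀ A ∈ 𝒜, ∀ h ∈ H \ A, f A h = 0)
    (g : Set ℝ → ℝ → ℝ)
    (hg : ∀ A, ∀ x : ℝ, g A x = f A x / (1 + |f A x|)) :
    ∀ (n : ℕ) (A : Fin n → Set ℝ), Function.Injective A → (∀ i, A i ∈ 𝒜) →
      ∀ P : MvPolynomial (Fin n) ℝ, P ≠ 0 → MvPolynomial.constantCoeff P = 0 →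
        ∃ r ∈ Set.Icc (0:ℝ) 1, MvPolynomial.eval (fun i => g (A i) r) P ≠ 0 :=
  gA_algebraically_independent_general H h1H 𝒜 hsub hind f hflin hfone hfzero g hg
end

section
/- Let H be a Hamel basis of ℝ over ℚ with 1 ∈ H, let A be an independent family of subsets of H \ {1}, let A₁,…,Aₙ ∈ A be distinct, and define f_A and g_A = f_A/(1+|f_A|) as usual. Let h₁,…,hₙ ∈ H be such that hᵢ ∈ Aᵢ and hᵢ ∉ A_j for j ≠ i, let c₁,…,cₙ ∈ ℚ and set r′ = c₁h₁ + ⋯ + cₙhₙ. Then for every nonempty open interval (α,β) ⊂ [0,1] and every real polynomial P in n variables, there exists r ∈ (α,β) such that P(g_{A₁}(r),…,g_{Aₙ}(r)) = P(g_{A₁}(r′),…,g_{Aₙ}(r′)). -/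
/-! A `ℚ`-linear map vanishing at `1` vanishes on `ℚ`, so every `f_A` (and hence every `g_A`)
is invariant under rational translations, while every open interval meets the rational
translates `r′ + ℚ` of `r′`. -/

open Set

theorem IsLinearMap.map_add_ratCast_of_map_one_eq_zero {M : Type*} [AddCommGroup M]
    [Module ℚ M] {f : ℝ → M} (hf : IsLinearMap ℚ f) (hf1 : f 1 = 0) (x : ℝ) (q : ℚ) :
    f (x + q) = f x := by
  have hfq : f q = 0 := by
    rw [← mul_one (q : ℝ), ← Rat.smul_def, hf.map_smul, hf1, smul_zero]
  rw [hf.map_add, hfq, add_zero]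

theorem exists_add_ratCast_mem_Ioo {K : Type*} [Field K] [LinearOrder K] [IsStrictOrderedRing K]
    [Archimedean K] (x : K) {a b : K} (hab : a < b) : ∃ q : ℚ, x + q ∈ Ioo a b := by
  obtain ⟨q, haq, hqb⟩ := exists_rat_btwn (sub_lt_sub_right hab x)
  exact ⟨q, by linarith, by linarith⟩

theorem polynomial_value_attained_in_every_interval_general (H : Set ℝ) (h1H : (1:ℝ) ∈ H)
    (𝒜 : Set (Set ℝ)) (hsub : ∀ A ∈ 𝒜, A ⊆ H \ {1})
    (f : Set ℝ → ℝ → ℝ)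
    (hflin : ∀ A ∈ 𝒜, IsLinearMap ℚ (f A))
    (hfzero : ∀ A ∈ 𝒜, ∀ h ∈ H \ A, f A h = 0)
    (g : Set ℝ → ℝ → ℝ)
    (hg : ∀ A, ∀ x : ℝ, g A x = f A x / (1 + |f A x|))
    (n : ℕ) (A : Fin n → Set ℝ) (hAmem : ∀ i, A i ∈ 𝒜)
    (h : Fin n → ℝ) (r' : ℝ)
    (α β : ℝ) (hαβ : α < β)
    (P : MvPolynomial (Fin n) ℝ) :
    ∃ r ∈ Set.Ioo α β,
      MvPolynomial.eval (fun i => g (A i) r) P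
        = MvPolynomial.eval (fun i => g (A i) r') P := by
  obtain ⟨q, hq⟩ := exists_add_ratCast_mem_Ioo r' hαβ
  refine ⟨r' + q, hq, ?_⟩
  have hf1 : ∀ i, f (A i) 1 = 0 := fun i =>
    hfzero _ (hAmem i) 1 ⟨h1H, fun h1A => (hsub _ (hAmem i) h1A).2 rfl⟩
  have hgq : (fun i => g (A i) (r' + q)) = fun i => g (A i) r' := by
    funext i
    rw [hg, hg, (hflin _ (hAmem i)).map_add_ratCast_of_map_one_eq_zero (hf1 i)]
  rw [hgq]

/-- Let `H` be a Hamel basis of `ℝ` over `ℚ` with `1 ∈ H`, let `𝒜` be an independent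
family of subsets of `H \ {1}`, let `A₁, …, Aₙ ∈ 𝒜` be distinct, and define
`f_A` (the `ℚ`-linear map which is `1` on `A` and `0` on `H \ A`) and
`g_A = f_A / (1 + |f_A|)`. Let `h₁, …, hₙ ∈ H` with `hᵢ ∈ Aᵢ` and `hᵢ ∉ A_j` for
`j ≠ i`, let `c₁, …, cₙ ∈ ℚ` and `r′ = c₁h₁ + ⋯ + cₙhₙ`. Then for every nonempty
open interval `(α,β) ⊆ [0,1]` and every real polynomial `P` in `n` variables,
there is `r ∈ (α,β)` with `P(g_{A₁}(r), …, g_{Aₙ}(r)) = P(g_{A₁}(r′), …, g_{Aₙ}(r′))`. -/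
theorem polynomial_value_attained_in_every_interval (H : Set ℝ) (h1H : (1:ℝ) ∈ H)
    (hLI : LinearIndependent ℚ (Subtype.val : H → ℝ))
    (hspan : Submodule.span ℚ H = ⊤)
    (𝒜 : Set (Set ℝ)) (hsub : ∀ A ∈ 𝒜, A ⊆ H \ {1})
    (hind : IsIndependentFamilyOn (H \ {1}) 𝒜)
    (f : Set ℝ → ℝ → ℝ)
    (hflin : ∀ A ∈ 𝒜, IsLinearMap ℚ (f A))
    (hfone : ∀ A ∈ 𝒜, ∀ h ∈ A, f A h = 1)
    (hfzero : ∀ A ∈ 𝒜, ∀ h ∈ H \ A, f A h = 0)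
    (g : Set ℝ → ℝ → ℝ)
    (hg : ∀ A, ∀ x : ℝ, g A x = f A x / (1 + |f A x|))
    (n : ℕ) (A : Fin n → Set ℝ) (hAinj : Function.Injective A) (hAmem : ∀ i, A i ∈ 𝒜)
    (h : Fin n → ℝ) (hhH : ∀ i, h i ∈ H)
    (hhA : ∀ i, h i ∈ A i) (hhA' : ∀ i j, j ≠ i → h i ∉ A j)
    (c : Fin n → ℚ) (r' : ℝ) (hr' : r' = ∑ i, (c i : ℝ) * h i)
    (α β : ℝ) (hαβ : α < β) (hIcc : Set.Ioo α β ⊆ Set.Icc (0:ℝ) 1)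
    (P : MvPolynomial (Fin n) ℝ) :
    ∃ r ∈ Set.Ioo α β,
      MvPolynomial.eval (fun i => g (A i) r) P
        = MvPolynomial.eval (fun i => g (A i) r') P :=
  polynomial_value_attained_in_every_interval_general H h1H 𝒜 hsub f hflin hfzero g hg n A hAmem h
    r' α β hαβ P
end

section
/- Let T ⊂ [0,1] be the fat Cantor set with complement ⋃_s (a_s,b_s) and let g : [0,1] → ℝ be the associated continuous function (g(x) = min{x−a_s, b_s−x}/s on (a_s,b_s), g = 0 on T). Let H ⊂ [1,2] be a set of reals that is linearly independent over ℚ and has cardinality 𝔠. Then the family of continuous functions { x ↦ g(x)^h : h ∈ H } is algebraically independent over ℝ: for every n ∈ ℕ, all distinct h₁,…,hₙ ∈ H, and every nonzero real polynomial P in n variables without constant term, the continuous function x ↦ P(g(x)^{h₁},…,g(x)^{hₙ}) is not identically zero on [0,1]. Consequently, these functions generate a free algebra of continuous functions on [0,1] with 𝔠 generators. -/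
/-!
The tent function `g` is `1`-Lipschitz, so its real powers of exponent `h ≥ 0` are continuous.
Since `T` has empty interior, some interval `(a_s, b_s)` lies in `[0,1]`, and near `a_s` the
function `g` takes every small positive value `t`. A polynomial relation among the `g^{h_i}`
therefore makes the generalized power sum `∑_d c_d t^{⟨d, h⟩}` vanish for all small `t > 0`.
By `ℚ`-linear independence of the `h_i` its exponents `⟨d, h⟩` are pairwise distinct, and
dividing by the smallest power and letting `t → 0⁺` shows that every coefficient `c_d` is zero.
-/

open MeasureTheory Set Cardinal Filter Topology

theorem eq_zero_of_sum_mul_rpow_eventually_eq_zero {ι : Type*} {s : Finset ι} {c e : ι → ℝ}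
    (he : InjOn e s) (h : ∀ᶠ t in 𝓝[>] 0, ∑ i ∈ s, c i * t ^ e i = 0) :
    ∀ i ∈ s, c i = 0 := by
  classical
  by_contra! ⟨i, hi, hci⟩
  set s' := s.filter (c · ≠ 0)
  obtain ⟨i₀, hi₀, hmin⟩ := s'.exists_min_image e ⟨i, Finset.mem_filter.2 ⟨hi, hci⟩⟩
  have hpos : ∀ j ∈ s', j ≠ i₀ → 0 < e j - e i₀ := fun j hj hne =>
    sub_pos.2 <| (hmin j hj).lt_of_ne fun heq =>
      hne (he (Finset.mem_filter.1 hj).1 (Finset.mem_filter.1 hi₀).1 heq.symm)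
  -- `F t = t ^ (-e i₀) * ∑ i ∈ s, c i * t ^ e i` for `t > 0`, and `F 0 = c i₀` as `0 ^ 0 = 1`.
  let F : ℝ → ℝ := fun t => ∑ j ∈ s', c j * t ^ (e j - e i₀)
  have hF0 : F 0 = c i₀ := by
    refine (Finset.sum_eq_single_of_mem i₀ hi₀ fun j hj hne => ?_).trans ?_
    · rw [Real.zero_rpow (hpos j hj hne).ne', mul_zero]
    · rw [sub_self, Real.rpow_zero, mul_one]
  have hFcont : ContinuousAt F 0 :=
    tendsto_finsetSum _ fun j hj =>
      (Real.continuousAt_rpow_const 0 _ (Or.inr (sub_nonneg.2 (hmin j hj)))).const_mul (c j)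
  have hFev : F =ᶠ[𝓝[>] 0] 0 := by
    filter_upwards [h, self_mem_nhdsWithin] with t ht (htpos : 0 < t)
    calc F t = t ^ (-e i₀) * ∑ j ∈ s, c j * t ^ e j := by
          rw [Finset.mul_sum, ← Finset.sum_filter_of_ne (p := (c · ≠ 0))
            fun j _ hj hcj => hj (by rw [hcj, zero_mul, mul_zero])]
          refine Finset.sum_congr rfl fun j _ => ?_
          rw [sub_eq_neg_add, Real.rpow_add htpos]
          ring
      _ = 0 := by rw [ht, mul_zero]
  have hlim : Tendsto F (𝓝[>] 0) (𝓝 (c i₀)) :=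
    hF0 ▸ hFcont.tendsto.mono_left nhdsWithin_le_nhds
  exact (Finset.mem_filter.1 hi₀).2 <|
    tendsto_nhds_unique hlim (tendsto_const_nhds.congr' hFev.symm)

theorem LinearIndependent.injective_sum_nsmul {ι M : Type*} [Fintype ι] [AddCommGroup M]
    [Module ℚ M] {v : ι → M} (hv : LinearIndependent ℚ v) :
    Function.Injective fun d : ι → ℕ => ∑ i, d i • v i := by
  intro d d' hdd'
  funext i
  have := hv.eq_coords_of_eq (f := fun i => (d i : ℚ)) (g := fun i => (d' i : ℚ))
    (by simpa only [Nat.cast_smul_eq_nsmul] using hdd') i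
  exact_mod_cast this

namespace MvPolynomial

theorem eval_rpow_eq_sum {σ : Type*} [Fintype σ] (P : MvPolynomial σ ℝ) (v : σ → ℝ) {t : ℝ}
    (ht : 0 < t) :
    eval (fun i => t ^ v i) P = ∑ d ∈ P.support, coeff d P * t ^ ∑ i, d i • v i := by
  rw [eval_eq']
  refine Finset.sum_congr rfl fun d _ => ?_
  rw [Real.rpow_sum_of_pos ht]
  congr 1
  refine Finset.prod_congr rfl fun i _ => ?_
  rw [nsmul_eq_mul, mul_comm, Real.rpow_mul ht.le, Real.rpow_natCast]

theorem eq_zero_of_eventually_eval_rpow_eq_zero {σ : Type*} [Fintype σ] {P : MvPolynomial σ ℝ}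
    {v : σ → ℝ} (hv : LinearIndependent ℚ v)
    (hP : ∀ᶠ t in 𝓝[>] 0, eval (fun i => t ^ v i) P = 0) : P = 0 := by
  have hcoeff := eq_zero_of_sum_mul_rpow_eventually_eq_zero (c := fun d => coeff d P)
    (hv.injective_sum_nsmul.comp DFunLike.coe_injective).injOn
    (by
      filter_upwards [hP, self_mem_nhdsWithin] with t ht (htpos : 0 < t)
      exact (eval_rpow_eq_sum P v htpos).symm.trans ht)
  by_contra hP0
  obtain ⟨d, hd⟩ := support_nonempty.2 hP0
  exact mem_support_iff.1 hd (hcoeff d hd)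

end MvPolynomial

structure IsTentFunction {ι : Type*} (a b w : ι → ℝ) (g : ℝ → ℝ) : Prop where
  apply_of_mem : ∀ s, ∀ x ∈ Ioo (a s) (b s), g x = min (x - a s) (b s - x) / w s
  apply_of_forall_notMem : ∀ x, (∀ s, x ∉ Ioo (a s) (b s)) → g x = 0

namespace IsTentFunction

variable {ι : Type*} {a b w : ι → ℝ} {g : ℝ → ℝ}

theorem nonneg (hg : IsTentFunction a b w g) (hw : ∀ s, 0 ≤ w s) (x : ℝ) : 0 ≤ g x := by
  by_cases hx : ∃ s, x ∈ Ioo (a s) (b s)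
  · obtain ⟨s, hxs⟩ := hx
    rw [hg.apply_of_mem s x hxs]
    exact div_nonneg (le_min (by linarith [hxs.1]) (by linarith [hxs.2])) (hw s)
  · exact (hg.apply_of_forall_notMem x (not_exists.1 hx)).ge

theorem le_abs_sub (hg : IsTentFunction a b w g) (hw : ∀ s, 1 ≤ w s) {x y : ℝ}
    (hxy : ∀ s, x ∈ Ioo (a s) (b s) → y ∉ Ioo (a s) (b s)) : g x ≤ |x - y| := by
  by_cases hx : ∃ s, x ∈ Ioo (a s) (b s)
  · obtain ⟨s, hxs⟩ := hx
    have hys := hxy s hxs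
    rw [mem_Ioo, not_and_or, not_lt, not_lt] at hys
    have hmin : min (x - a s) (b s - x) ≤ |x - y| := by
      rcases hys with hy | hy
      · exact (min_le_left _ _).trans (by linarith [le_abs_self (x - y)])
      · exact (min_le_right _ _).trans (by linarith [neg_abs_le (x - y)])
    rw [hg.apply_of_mem s x hxs]
    exact (div_le_self (le_min (by linarith [hxs.1]) (by linarith [hxs.2])) (hw s)).trans hmin
  · rw [hg.apply_of_forall_notMem x (not_exists.1 hx)]
    exact abs_nonneg _

theorem lipschitzWith_one (hg : IsTentFunction a b w g) (hw : ∀ s, 1 ≤ w s) :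
    LipschitzWith 1 g := by
  refine LipschitzWith.of_dist_le_mul fun x y => ?_
  rw [NNReal.coe_one, one_mul, Real.dist_eq, Real.dist_eq]
  by_cases hxy : ∃ s, x ∈ Ioo (a s) (b s) ∧ y ∈ Ioo (a s) (b s)
  · obtain ⟨s, hxs, hys⟩ := hxy
    have hmin := abs_min_sub_min_le_max (x - a s) (b s - x) (y - a s) (b s - y)
    rw [sub_sub_sub_cancel_right, sub_sub_sub_cancel_left, abs_sub_comm y x, max_self] at hmin
    rw [hg.apply_of_mem s x hxs, hg.apply_of_mem s y hys, div_sub_div_same, abs_div,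
      abs_of_pos (zero_lt_one.trans_le (hw s))]
    exact (div_le_self (abs_nonneg _) (hw s)).trans hmin
  · push Not at hxy
    have hgx := hg.le_abs_sub hw hxy
    have hgy := hg.le_abs_sub hw fun s hys hxs => hxy s hxs hys
    have hw₀ : ∀ s, 0 ≤ w s := fun s => zero_le_one.trans (hw s)
    rw [abs_sub_comm] at hgy
    rw [abs_sub_le_iff]
    constructor <;> linarith [hg.nonneg hw₀ x, hg.nonneg hw₀ y]

theorem eventually_exists_apply_eq (hg : IsTentFunction a b w g) (hw : ∀ s, 0 < w s) {s : ι}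
    (hs : a s < b s) : ∀ᶠ t in 𝓝[>] 0, ∃ x ∈ Ioo (a s) (b s), g x = t := by
  have hδ : 0 < (b s - a s) / (2 * w s) := div_pos (sub_pos.2 hs) (by linarith [hw s])
  filter_upwards [Ioo_mem_nhdsGT hδ] with t ⟨ht₀, htδ⟩
  have hwt : 2 * (w s * t) < b s - a s := by
    rw [lt_div_iff₀ (by linarith [hw s])] at htδ
    linarith
  have hwt₀ : 0 < w s * t := mul_pos (hw s) ht₀
  have hmem : a s + w s * t ∈ Ioo (a s) (b s) := ⟨by linarith, by linarith⟩
  refine ⟨a s + w s * t, hmem, ?_⟩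
  rw [hg.apply_of_mem s _ hmem, min_eq_left (by linarith), add_sub_cancel_left,
    mul_div_cancel_left₀ _ (hw s).ne']

end IsTentFunction

theorem powers_of_tent_function_algebraically_independent_general
    (T : Set ℝ) (hTnd : interior T = ∅)
    (a b : ℕ → ℝ)
    (hcompl : Set.Icc (0:ℝ) 1 \ T = ⋃ s, Set.Ioo (a s) (b s))
    (g : ℝ → ℝ)
    (hg1 : ∀ s : ℕ, ∀ x ∈ Set.Ioo (a s) (b s),
      g x = min (x - a s) (b s - x) / ((s : ℝ) + 1))
    (hg0 : ∀ x : ℝ, (∀ s : ℕ, x ∉ Set.Ioo (a s) (b s)) → g x = 0)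
    (H : Set ℝ) (hH : H ⊆ Set.Icc 1 2)
    (hHLI : LinearIndependent ℚ (Subtype.val : H → ℝ)) :
    (∀ h ∈ H, ContinuousOn (fun x : ℝ => g x ^ h) (Set.Icc (0:ℝ) 1)) ∧
      ∀ (n : ℕ) (h : Fin n → ℝ), Function.Injective h → (∀ i, h i ∈ H) →
        ∀ P : MvPolynomial (Fin n) ℝ, P ≠ 0 → MvPolynomial.constantCoeff P = 0 →
          ∃ x ∈ Set.Icc (0:ℝ) 1,
            MvPolynomial.eval (fun i => g x ^ h i) P ≠ 0 := by
  have hg : IsTentFunction a b (fun s => (s : ℝ) + 1) g := ⟨hg1, hg0⟩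
  have hw : ∀ s : ℕ, (1 : ℝ) ≤ s + 1 := fun s => le_add_of_nonneg_left s.cast_nonneg
  refine ⟨fun h hh => ((hg.lipschitzWith_one hw).continuous.rpow_const
    fun _ => Or.inr (by linarith [(hH hh).1])).continuousOn, ?_⟩
  intro n h hinj hmem P hP _
  have hLI : LinearIndependent ℚ h :=
    hHLI.comp (fun i => ⟨h i, hmem i⟩) fun i j hij => hinj (congrArg Subtype.val hij)
  obtain ⟨x₀, hx₀⟩ : (Icc (0 : ℝ) 1 \ T).Nonempty := by
    refine sdiff_nonempty.2 fun hsub => ?_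
    have := interior_mono hsub
    rw [hTnd, interior_Icc] at this
    exact this (show (1 / 2 : ℝ) ∈ Ioo 0 1 by norm_num)
  obtain ⟨s, hs⟩ := mem_iUnion.1 (hcompl ▸ hx₀)
  by_contra! hzero
  refine hP (MvPolynomial.eq_zero_of_eventually_eval_rpow_eq_zero hLI ?_)
  filter_upwards [hg.eventually_exists_apply_eq (fun s => by positivity) (hs.1.trans hs.2)]
    with t ⟨x, hx, hxt⟩
  rw [← hxt]
  exact hzero x (hcompl.symm.subset (mem_iUnion_of_mem s hx)).1

/-- Let `T ⊆ [0,1]` be a fat Cantor set (closed, nowhere dense, of positive Lebesgue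
measure) whose complement `[0,1] \ T` is the disjoint union of the open intervals
`(a_s, b_s)`, and let `g` be the associated continuous function
(`g x = min (x - a_s) (b_s - x) / s` on `(a_s, b_s)`, with positive denominators
`s + 1`, `s ∈ ℕ`, and `g = 0` on `T`). Let `H ⊆ [1,2]` be linearly independent
over `ℚ` with cardinality `𝔠`. Then the functions `x ↦ g(x)^h`, `h ∈ H`, are
continuous on `[0,1]` and algebraically independent over `ℝ`: for all distinct
`h₁, …, hₙ ∈ H` and every nonzero real polynomial `P` in `n` variables without
constant term, the function `x ↦ P(g(x)^{h₁}, …, g(x)^{hₙ})` is not identically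
zero on `[0,1]`. -/
theorem powers_of_tent_function_algebraically_independent
    (T : Set ℝ) (hTsub : T ⊆ Set.Icc 0 1)
    (hTclosed : IsClosed T) (hTnd : interior T = ∅)
    (hTpos : 0 < volume T)
    (a b : ℕ → ℝ) (hab : ∀ s, a s < b s)
    (hdisj : Pairwise fun s t => Disjoint (Set.Ioo (a s) (b s)) (Set.Ioo (a t) (b t)))
    (hcompl : Set.Icc (0:ℝ) 1 \ T = ⋃ s, Set.Ioo (a s) (b s))
    (g : ℝ → ℝ)
    (hg1 : ∀ s : ℕ, ∀ x ∈ Set.Ioo (a s) (b s),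
      g x = min (x - a s) (b s - x) / ((s : ℝ) + 1))
    (hg0 : ∀ x : ℝ, (∀ s : ℕ, x ∉ Set.Ioo (a s) (b s)) → g x = 0)
    (H : Set ℝ) (hH : H ⊆ Set.Icc 1 2)
    (hHLI : LinearIndependent ℚ (Subtype.val : H → ℝ))
    (hHcard : (#H) = Cardinal.continuum) :
    (∀ h ∈ H, ContinuousOn (fun x : ℝ => g x ^ h) (Set.Icc (0:ℝ) 1)) ∧
      ∀ (n : ℕ) (h : Fin n → ℝ), Function.Injective h → (∀ i, h i ∈ H) →
        ∀ P : MvPolynomial (Fin n) ℝ, P ≠ 0 → MvPolynomial.constantCoeff P = 0 →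
          ∃ x ∈ Set.Icc (0:ℝ) 1,
            MvPolynomial.eval (fun i => g x ^ h i) P ≠ 0 :=
  powers_of_tent_function_algebraically_independent_general T hTnd a b hcompl g hg1 hg0 H hH hHLI
end
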